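/- Let A : ℝ → ℝ^{3×3}, n : ℝ → ℝ³ (unit, differentiable, satisfying n' = −(I − n nᵀ)Aᵀ n), B : ℝ → ℝ³ continuous, and w : ℝ → ℝ. If ξ : ℝ → ℝ³ satisfies ξ' = A(τ)ξ + B(τ)w(τ), then s(τ) := n(τ)ᵀ ξ(τ) satisfies s'(τ) = (n(τ)ᵀ A(τ) n(τ)) s(τ) + (n(τ)ᵀ B(τ)) w(τ). -/

import Mathlib

open Matrix

theorem HasDerivAt.dotProduct {𝕜 ι : Type*} [NontriviallyNormedField 𝕜] [Fintype ι]
    {f g : 𝕜 → ι → 𝕜} {f' g' : ι → 𝕜} {x : 𝕜}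
    (hf : HasDerivAt f f' x) (hg : HasDerivAt g g' x) :
    HasDerivAt (fun t => f t ⬝ᵥ g t) (f' ⬝ᵥ g x + f x ⬝ᵥ g') x := by
  have hsum := HasDerivAt.fun_sum (u := Finset.univ) fun i _ =>
    (hasDerivAt_pi.mp hf i).fun_mul (hasDerivAt_pi.mp hg i)
  unfold _root_.dotProduct
  rw [← Finset.sum_add_distrib]
  exact hsum

theorem neg_one_sub_vecMulVec_mulVec_transpose_dotProduct_add
    {R ι : Type*} [CommRing R] [Fintype ι] [DecidableEq ι]
    (M : Matrix ι ι R) (v x : ι → R) :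
    (-((1 - vecMulVec v v) *ᵥ (Mᵀ *ᵥ v))) ⬝ᵥ x + v ⬝ᵥ (M *ᵥ x)
      = (v ⬝ᵥ (M *ᵥ v)) * (v ⬝ᵥ x) := by
  have hproj : vecMulVec v v *ᵥ (Mᵀ *ᵥ v) = (v ⬝ᵥ (M *ᵥ v)) • v := by
    rw [vecMulVec_mulVec, op_smul_eq_smul, dotProduct_mulVec, vecMul_transpose,
      dotProduct_comm]
  have hadj : (Mᵀ *ᵥ v) ⬝ᵥ x = v ⬝ᵥ (M *ᵥ x) := by
    rw [dotProduct_mulVec, mulVec_transpose]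
  rw [sub_mulVec, one_mulVec, hproj, neg_dotProduct, sub_dotProduct, hadj,
    smul_dotProduct, smul_eq_mul]
  ring

theorem stmt_6_general (A : ℝ → Matrix (Fin 3) (Fin 3) ℝ)
    (B : ℝ → (Fin 3 → ℝ))
    (w : ℝ → ℝ)
    (n : ℝ → (Fin 3 → ℝ))
    (hn : ∀ τ, HasDerivAt n
        (-(((1 : Matrix (Fin 3) (Fin 3) ℝ) - vecMulVec (n τ) (n τ)).mulVec
            ((A τ)ᵀ.mulVec (n τ)))) τ)
    (ξ : ℝ → (Fin 3 → ℝ))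
    (hξ : ∀ τ, HasDerivAt ξ ((A τ).mulVec (ξ τ) + w τ • B τ) τ) :
    ∀ τ, HasDerivAt (fun τ => (n τ) ⬝ᵥ (ξ τ))
      (((n τ) ⬝ᵥ ((A τ).mulVec (n τ))) * ((n τ) ⬝ᵥ (ξ τ))
        + ((n τ) ⬝ᵥ (B τ)) * w τ) τ := by
  intro τ
  refine ((hn τ).dotProduct (hξ τ)).congr_deriv ?_
  rw [dotProduct_add, dotProduct_smul, smul_eq_mul, ← add_assoc,
    neg_one_sub_vecMulVec_mulVec_transpose_dotProduct_add, mul_comm (w τ)]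

theorem stmt_6 (A : ℝ → Matrix (Fin 3) (Fin 3) ℝ)
    (B : ℝ → (Fin 3 → ℝ)) (hBcont : Continuous B)
    (w : ℝ → ℝ)
    (n : ℝ → (Fin 3 → ℝ))
    (hn : ∀ τ, HasDerivAt n
        (-(((1 : Matrix (Fin 3) (Fin 3) ℝ) - vecMulVec (n τ) (n τ)).mulVec
            ((A τ)ᵀ.mulVec (n τ)))) τ)
    (hunit : ∀ τ, (n τ) ⬝ᵥ (n τ) = 1)
    (ξ : ℝ → (Fin 3 → ℝ))
    (hξ : ∀ τ, HasDerivAt ξ ((A τ).mulVec (ξ τ) + w τ • B τ) τ) :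
    ∀ τ, HasDerivAt (fun τ => (n τ) ⬝ᵥ (ξ τ))
      (((n τ) ⬝ᵥ ((A τ).mulVec (n τ))) * ((n τ) ⬝ᵥ (ξ τ))
        + ((n τ) ⬝ᵥ (B τ)) * w τ) τ :=
  stmt_6_general A B w n hn ξ hξ
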